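/- arXiv:1905.05983 — 3 statements merged into one kernel-verified Lean document; each statement's English description precedes it below -/
import Mathlib

section
/- Let s, t be real numbers with −1 < s < t < 1. Then the point 2·(s,s²,s³) + 2·(t,t²,t³) does not lie on the topological boundary of 𝒜_{3,4}. -/
/-!
Write `γ x = (x, x², x³)`, `u = (s + t) / 2` and `m = (t - s) / 2`. For any `p, q` with
`p² + q² = 2m²` the four points `u ± p, u ± q` have the same first three power sums as
`s, s, t, t`, so `2γ(s) + 2γ(t) = γ(u - p) + γ(u + p) + γ(u - q) + γ(u + q)`, and `p ≠ q` can be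
chosen with all four points in `(-1, 1)`. With three distinct parameters the derivative of
`(x₁, …, x₄) ↦ ∑ γ(xᵢ)` is onto (its columns `γ'(xᵢ)` form a Vandermonde system), so by the
inverse function theorem this map sends a neighbourhood of the parameters inside `(-1, 1)⁴` onto
a neighbourhood of the point, which therefore lies in the interior of `𝒜₃,₄`.
-/

/-- The Minkowski sum of `n` copies of the twisted cubic segment
`{(t, t^2, t^3) : -1 <= t <= 1}`. -/
def A3 (n : ℕ) : Set (ℝ × ℝ × ℝ) :=
  {p | ∃ t : Fin n → ℝ, (∀ i, -1 ≤ t i ∧ t i ≤ 1) ∧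
       p = (∑ i, t i, ∑ i, (t i) ^ 2, ∑ i, (t i) ^ 3)}

open Set Filter Topology

def momentCurve (x : ℝ) : ℝ × ℝ × ℝ := (x, x ^ 2, x ^ 3)

def momentCurveDeriv (x : ℝ) : ℝ × ℝ × ℝ := (1, 2 * x, 3 * x ^ 2)

lemma hasStrictDerivAt_momentCurve (x : ℝ) :
    HasStrictDerivAt momentCurve (momentCurveDeriv x) x := by
  have h := (hasStrictDerivAt_id x).prodMk
    ((hasStrictDerivAt_pow 2 x).prodMk (hasStrictDerivAt_pow 3 x))
  norm_num at h
  exact h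

section

variable {n : ℕ}

lemma sum_momentCurve (t : Fin n → ℝ) :
    ∑ i, momentCurve (t i) = (∑ i, t i, ∑ i, t i ^ 2, ∑ i, t i ^ 3) := by
  simp only [momentCurve, Prod.ext_iff, Prod.fst_sum, Prod.snd_sum, and_self]

lemma sum_momentCurve_mem_A3 {t : Fin n → ℝ} (ht : ∀ i, t i ∈ Icc (-1) 1) :
    ∑ i, momentCurve (t i) ∈ A3 n :=
  ⟨t, ht, sum_momentCurve t⟩

noncomputable def sumMomentCurveDeriv (t : Fin n → ℝ) : (Fin n → ℝ) →L[ℝ] ℝ × ℝ × ℝ :=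
  ∑ i, (ContinuousLinearMap.proj (R := ℝ) (φ := fun _ => ℝ) i).smulRight (momentCurveDeriv (t i))

lemma hasStrictFDerivAt_sum_momentCurve (t : Fin n → ℝ) :
    HasStrictFDerivAt (fun t : Fin n → ℝ => ∑ i, momentCurve (t i)) (sumMomentCurveDeriv t) t := by
  unfold sumMomentCurveDeriv
  refine HasStrictFDerivAt.fun_sum fun i _ => ?_
  have h := (hasStrictDerivAt_momentCurve (t i)).hasStrictFDerivAt.comp t
    (hasStrictFDerivAt_apply (𝕜 := ℝ) i t)
  exact h.congr_fderiv (by ext <;> simp)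

lemma sumMomentCurveDeriv_single (t : Fin n → ℝ) (i : Fin n) (r : ℝ) :
    sumMomentCurveDeriv t (Pi.single i r) = r • momentCurveDeriv (t i) := by
  simp [sumMomentCurveDeriv, Pi.single_apply]

-- Lagrange interpolation at the nodes `a, b, c`.
lemma exists_combination_momentCurveDeriv {a b c : ℝ} (hab : a ≠ b) (hac : a ≠ c) (hbc : b ≠ c)
    (w : ℝ × ℝ × ℝ) : ∃ x y z : ℝ,
      x • momentCurveDeriv a + y • momentCurveDeriv b + z • momentCurveDeriv c = w := by
  obtain ⟨w₀, w₁, w₂⟩ := w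
  have hab' := sub_ne_zero.2 hab
  have hac' := sub_ne_zero.2 hac
  have hbc' := sub_ne_zero.2 hbc
  refine ⟨(w₂ / 3 - (b + c) * w₁ / 2 + b * c * w₀) / ((a - b) * (a - c)),
    (w₂ / 3 - (a + c) * w₁ / 2 + a * c * w₀) / ((b - a) * (b - c)),
    (w₂ / 3 - (a + b) * w₁ / 2 + a * b * w₀) / ((c - a) * (c - b)), ?_⟩
  simp only [momentCurveDeriv, Prod.smul_mk, Prod.mk_add_mk, smul_eq_mul, Prod.mk.injEq]
  refine ⟨?_, ?_, ?_⟩ <;> field_simp <;> ring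

lemma range_sumMomentCurveDeriv {t : Fin n → ℝ} {i j k : Fin n}
    (hij : t i ≠ t j) (hik : t i ≠ t k) (hjk : t j ≠ t k) :
    (sumMomentCurveDeriv t).range = ⊤ := by
  refine LinearMap.range_eq_top.2 fun w => ?_
  obtain ⟨x, y, z, hw⟩ := exists_combination_momentCurveDeriv hij hik hjk w
  refine ⟨Pi.single i x + Pi.single j y + Pi.single k z, ?_⟩
  simp only [ContinuousLinearMap.coe_coe, map_add, sumMomentCurveDeriv_single, hw]

lemma sum_momentCurve_mem_interior_A3 {t : Fin n → ℝ} (ht : ∀ i, t i ∈ Ioo (-1) 1)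
    {i j k : Fin n} (hij : t i ≠ t j) (hik : t i ≠ t k) (hjk : t j ≠ t k) :
    ∑ i, momentCurve (t i) ∈ interior (A3 n) := by
  rw [mem_interior_iff_mem_nhds, ← (hasStrictFDerivAt_sum_momentCurve t).map_nhds_eq_of_surj
    (range_sumMomentCurveDeriv hij hik hjk)]
  have hU : univ.pi (fun _ => Ioo (-1 : ℝ) 1) ∈ 𝓝 t :=
    (isOpen_set_pi finite_univ fun _ _ => isOpen_Ioo).mem_nhds fun i _ => ht i
  refine mem_of_superset (image_mem_map hU) ?_
  rintro _ ⟨s, hs, rfl⟩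
  exact sum_momentCurve_mem_A3 fun i => Ioo_subset_Icc_self (hs i (mem_univ i))

end

lemma exists_sq_add_sq_eq_two_mul_sq {m r : ℝ} (hm : 0 < m) (hmr : m < r) :
    ∃ p q : ℝ, 0 < q ∧ q < p ∧ p < r ∧ p ^ 2 + q ^ 2 = 2 * m ^ 2 := by
  obtain ⟨c, hc, hcm, hcr⟩ : ∃ c, 0 < c ∧ c < m ^ 2 ∧ c < r ^ 2 - m ^ 2 := by
    obtain ⟨c, hc, hc'⟩ := exists_between (lt_min (by positivity : 0 < m ^ 2)
      (sub_pos.2 (by gcongr : m ^ 2 < r ^ 2)))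
    exact ⟨c, hc, lt_min_iff.1 hc'⟩
  refine ⟨√(m ^ 2 + c), √(m ^ 2 - c), Real.sqrt_pos.2 (by linarith),
    Real.sqrt_lt_sqrt (by linarith) (by linarith), ?_, ?_⟩
  · exact (Real.sqrt_lt' (by linarith)).2 (by linarith)
  · rw [Real.sq_sqrt (by positivity), Real.sq_sqrt (by linarith)]
    ring

theorem two_two_not_boundary (s t : ℝ) (hs : -1 < s) (hst : s < t) (ht : t < 1) :
    (2 * s + 2 * t, 2 * s ^ 2 + 2 * t ^ 2, 2 * s ^ 3 + 2 * t ^ 3) ∉ frontier (A3 4) := by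
  obtain ⟨p, q, hq, hqp, hp, hpq⟩ := exists_sq_add_sq_eq_two_mul_sq (m := (t - s) / 2)
    (r := min (1 - (s + t) / 2) (1 + (s + t) / 2)) (by linarith)
    (lt_min (by linarith) (by linarith))
  obtain ⟨hp₁, hp₂⟩ := lt_min_iff.1 hp
  set x : Fin 4 → ℝ := ![(s + t) / 2 - p, (s + t) / 2 + p, (s + t) / 2 - q, (s + t) / 2 + q]
  have hx : ∀ i, x i ∈ Ioo (-1) 1 := by
    intro i
    fin_cases i <;>
      simp only [x, Fin.zero_eta, Fin.mk_one, Fin.reduceFinMk, Matrix.cons_val_zero,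
        Matrix.cons_val_one, Matrix.cons_val, mem_Ioo] <;>
      constructor <;> linarith
  have hsum : ∑ i, momentCurve (x i) =
      (2 * s + 2 * t, 2 * s ^ 2 + 2 * t ^ 2, 2 * s ^ 3 + 2 * t ^ 3) := by
    simp only [Fin.sum_univ_four, x, Matrix.cons_val, momentCurve, Prod.mk_add_mk, Prod.mk.injEq]
    exact ⟨by ring, by linear_combination 2 * hpq, by linear_combination 3 * (s + t) * hpq⟩
  have h01 : x 0 ≠ x 1 := by intro h; simp only [x, Matrix.cons_val] at h; linarith
  have h02 : x 0 ≠ x 2 := by intro h; simp only [x, Matrix.cons_val] at h; linarith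
  have h12 : x 1 ≠ x 2 := by intro h; simp only [x, Matrix.cons_val] at h; linarith
  rw [← hsum]
  exact disjoint_left.1 disjoint_interior_frontier (sum_momentCurve_mem_interior_A3 hx h01 h02 h12)
end

section
/- For every δ > 0 there exists ε > 0 such that (s,s²,s³) + 2·(t,t²,t³) + (0,0,ε′) ∈ 𝒜_{3,3} for all real numbers s, t with −1 ≤ s < t < 1 and 1−t ≥ δ, t−s ≥ δ, and all 0 ≤ ε′ ≤ ε. -/
theorem mem_A3_three {a b c : ℝ} (ha : a ∈ Set.Icc (-1) 1) (hb : b ∈ Set.Icc (-1) 1)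
    (hc : c ∈ Set.Icc (-1) 1) :
    (a + b + c, a ^ 2 + b ^ 2 + c ^ 2, a ^ 3 + b ^ 3 + c ^ 3) ∈ A3 3 := by
  refine ⟨![a, b, c], fun i => ?_, by simp [Fin.sum_univ_three]⟩
  fin_cases i
  exacts [ha, hb, hc]

theorem power_sums_split {s t α r : ℝ} (hr : r ^ 2 = α * (t - s) - 3 / 4 * α ^ 2) :
    ((s + α) + (t - α / 2 + r) + (t - α / 2 - r),
      (s + α) ^ 2 + (t - α / 2 + r) ^ 2 + (t - α / 2 - r) ^ 2,
      (s + α) ^ 3 + (t - α / 2 + r) ^ 3 + (t - α / 2 - r) ^ 3) =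
    (s + 2 * t, s ^ 2 + 2 * t ^ 2, s ^ 3 + 2 * t ^ 3 + 3 * α * (t - s - α) ^ 2) := by
  refine Prod.ext (by ring) (Prod.ext ?_ ?_)
  · linear_combination 2 * hr
  · linear_combination 3 * (2 * t - α) * hr

theorem exists_mem_Icc_cubic_eq {d α₀ y : ℝ} (hα₀ : 0 ≤ α₀) (hy₀ : 0 ≤ y)
    (hy : y ≤ 3 * α₀ * (d - α₀) ^ 2) :
    ∃ α ∈ Set.Icc 0 α₀, 3 * α * (d - α) ^ 2 = y :=
  intermediate_value_Icc hα₀ (by fun_prop) ⟨by simpa using hy₀, hy⟩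

theorem lm_1200_up (δ : ℝ) (hδ : 0 < δ) :
    ∃ ε : ℝ, 0 < ε ∧ ∀ s t ε' : ℝ, -1 ≤ s → s < t → t < 1 →
      δ ≤ 1 - t → δ ≤ t - s → 0 ≤ ε' → ε' ≤ ε →
      (s + 2 * t, s ^ 2 + 2 * t ^ 2, s ^ 3 + 2 * t ^ 3 + ε') ∈ A3 3 := by
  refine ⟨δ ^ 4 / 16, by positivity, fun s t ε' hs _ _ hδt hδts hε'0 hε'ε => ?_⟩
  have hδ1 : δ ≤ 1 := by linarith
  have hsweep : δ ^ 4 / 16 ≤ 3 * (δ ^ 2 / 8) * (t - s - δ ^ 2 / 8) ^ 2 := by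
    have hgap : δ / 2 ≤ t - s - δ ^ 2 / 8 := by nlinarith
    nlinarith [mul_le_mul_of_nonneg_left (pow_le_pow_left₀ (by positivity) hgap 2)
      (by positivity : 0 ≤ 3 * (δ ^ 2 / 8))]
  obtain ⟨α, ⟨hα0, hαδ⟩, hαε'⟩ :=
    exists_mem_Icc_cubic_eq (by positivity) hε'0 (hε'ε.trans hsweep)
  have hα_small : α ≤ δ / 8 := by nlinarith
  have hr2 : 0 ≤ α * (t - s) - 3 / 4 * α ^ 2 := by nlinarith
  set r := √(α * (t - s) - 3 / 4 * α ^ 2)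
  have hr0 : 0 ≤ r := Real.sqrt_nonneg _
  have hrδ : r ≤ δ / 2 := Real.sqrt_le_iff.mpr ⟨by positivity, by nlinarith⟩
  rw [← hαε', ← power_sums_split (Real.sq_sqrt hr2)]
  exact mem_A3_three ⟨by linarith, by linarith⟩ ⟨by linarith, by linarith⟩
    ⟨by linarith, by linarith⟩
end

section
/- For every δ > 0 there exists ε > 0 such that 2·(s,s²,s³) + (t,t²,t³) − (0,0,ε′) ∈ 𝒜_{3,3} for all real numbers s, t with −1 < s < t ≤ 1 and t−s ≥ δ, s−(−1) ≥ δ, and all 0 ≤ ε′ ≤ ε. -/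
/-!
With `d = ε' / 3`, the cubic `(x - s)^2 (x - t) + d` differs from `(x - s)^2 (x - t)` only in its
constant term, so by Vieta its roots have the elementary symmetric functions of `(s, s, t)` except
for the product, which drops by `d`; by Newton's identities their power sums are those of
`(s, s, t)` except the cube sum, which drops by `3 d = ε'`. For `d` small in terms of `δ` the
intermediate value theorem puts three distinct roots in `(-1, s)`, `(s, (s + t) / 2)` and
`((s + t) / 2, t)`.
-/

open Set

lemma mk_sum_pow_mem_A3_three {a b c : ℝ} (ha : a ∈ Icc (-1) 1) (hb : b ∈ Icc (-1) 1)
    (hc : c ∈ Icc (-1) 1) : (a + b + c, a ^ 2 + b ^ 2 + c ^ 2, a ^ 3 + b ^ 3 + c ^ 3) ∈ A3 3 := by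
  refine ⟨![a, b, c], fun i => ?_, by simp [Fin.sum_univ_three]⟩
  fin_cases i <;> simpa

section Vieta

variable {R : Type*} [CommRing R] [NoZeroDivisors R] {x y z : R}

lemma quadratic_coeffs_eq_zero_of_three_roots {A B C : R} (hxy : x ≠ y) (hxz : x ≠ z)
    (hyz : y ≠ z) (hx : A * x ^ 2 + B * x + C = 0) (hy : A * y ^ 2 + B * y + C = 0)
    (hz : A * z ^ 2 + B * z + C = 0) : A = 0 ∧ B = 0 ∧ C = 0 := by
  have hAxy : A * (x + y) + B = 0 := eq_zero_of_ne_zero_of_mul_left_eq_zero (sub_ne_zero.mpr hxy)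
    (by linear_combination hx - hy)
  have hAxz : A * (x + z) + B = 0 := eq_zero_of_ne_zero_of_mul_left_eq_zero (sub_ne_zero.mpr hxz)
    (by linear_combination hx - hz)
  have hA : A = 0 := eq_zero_of_ne_zero_of_mul_left_eq_zero (sub_ne_zero.mpr hyz)
    (by linear_combination hAxy - hAxz)
  have hB : B = 0 := by linear_combination hAxy - (x + y) * hA
  exact ⟨hA, hB, by linear_combination hx - x ^ 2 * hA - x * hB⟩

lemma vieta_of_three_roots {p q r : R} (hxy : x ≠ y) (hxz : x ≠ z) (hyz : y ≠ z)
    (hx : x ^ 3 - p * x ^ 2 + q * x - r = 0) (hy : y ^ 3 - p * y ^ 2 + q * y - r = 0)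
    (hz : z ^ 3 - p * z ^ 2 + q * z - r = 0) :
    x + y + z = p ∧ x * y + x * z + y * z = q ∧ x * y * z = r := by
  -- Subtracting `(w - x) (w - y) (w - z)`, which vanishes at all three roots, leaves a quadratic.
  obtain ⟨hp, hq, hr⟩ := quadratic_coeffs_eq_zero_of_three_roots (A := x + y + z - p)
    (B := q - (x * y + x * z + y * z)) (C := x * y * z - r) hxy hxz hyz
    (by linear_combination hx) (by linear_combination hy) (by linear_combination hz)
  exact ⟨sub_eq_zero.mp hp, (sub_eq_zero.mp hq).symm, sub_eq_zero.mp hr⟩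

lemma power_sums_of_roots_add_const {a b c d : R} (hxy : x ≠ y) (hxz : x ≠ z) (hyz : y ≠ z)
    (hx : (x - a) * (x - b) * (x - c) + d = 0) (hy : (y - a) * (y - b) * (y - c) + d = 0)
    (hz : (z - a) * (z - b) * (z - c) + d = 0) :
    x + y + z = a + b + c ∧ x ^ 2 + y ^ 2 + z ^ 2 = a ^ 2 + b ^ 2 + c ^ 2 ∧
      x ^ 3 + y ^ 3 + z ^ 3 = a ^ 3 + b ^ 3 + c ^ 3 - 3 * d := by
  obtain ⟨h₁, h₂, h₃⟩ := vieta_of_three_roots (p := a + b + c) (q := a * b + a * c + b * c)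
    (r := a * b * c - d) hxy hxz hyz
    (by linear_combination hx) (by linear_combination hy) (by linear_combination hz)
  -- Newton's identities `p₂ = e₁² - 2 e₂` and `p₃ = e₁³ - 3 e₁ e₂ + 3 e₃`.
  refine ⟨h₁, ?_, ?_⟩
  · linear_combination (x + y + z + a + b + c) * h₁ - 2 * h₂
  · linear_combination ((x + y + z) ^ 2 + (x + y + z) * (a + b + c) + (a + b + c) ^ 2
      - 3 * (x * y + x * z + y * z)) * h₁ - 3 * (a + b + c) * h₂ + 3 * h₃

end Vieta

lemma exists_three_roots_sq_mul_add {L s t d : ℝ} (hLs : L < s) (hst : s < t)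
    (hd : 0 < d) (hd_mid : d < (t - s) ^ 3 / 8) (hd_L : d < (s - L) ^ 2 * (t - L)) :
    ∃ x y z, L < x ∧ x < s ∧ s < y ∧ y < z ∧ z < t ∧
      (x - s) ^ 2 * (x - t) + d = 0 ∧ (y - s) ^ 2 * (y - t) + d = 0 ∧
      (z - s) ^ 2 * (z - t) + d = 0 := by
  set f : ℝ → ℝ := fun w => (w - s) ^ 2 * (w - t) + d
  have hf : Continuous f := by fun_prop
  set m := (s + t) / 2
  have hfL : f L < 0 := by simp only [f]; nlinarith
  have hfs : 0 < f s := by simpa [f]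
  have hfm : f m < 0 := by simp only [f, m]; nlinarith
  have hft : 0 < f t := by simpa [f]
  have hsm : s < m := by simp only [m]; linarith
  have hmt : m < t := by simp only [m]; linarith
  obtain ⟨x, ⟨hLx, hxs⟩, hx⟩ :=
    intermediate_value_Ioo hLs.le hf.continuousOn ⟨hfL, hfs⟩
  obtain ⟨y, ⟨hsy, hym⟩, hy⟩ :=
    intermediate_value_Ioo' hsm.le hf.continuousOn ⟨hfm, hfs⟩
  obtain ⟨z, ⟨hmz, hzt⟩, hz⟩ :=
    intermediate_value_Ioo hmt.le hf.continuousOn ⟨hfm, hft⟩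
  exact ⟨x, y, z, hLx, hxs, hsy, hym.trans hmz, hzt, hx, hy, hz⟩

theorem lm_2100_down (δ : ℝ) (hδ : 0 < δ) :
    ∃ ε : ℝ, 0 < ε ∧ ∀ s t ε' : ℝ, -1 < s → s < t → t ≤ 1 →
      δ ≤ t - s → δ ≤ s - (-1) → 0 ≤ ε' → ε' ≤ ε →
      (2 * s + t, 2 * s ^ 2 + t ^ 2, 2 * s ^ 3 + t ^ 3 - ε') ∈ A3 3 := by
  refine ⟨δ ^ 3 / 4, by positivity, fun s t ε' hs hst ht hδts hδs hε' hε'ε => ?_⟩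
  rcases hε'.eq_or_lt with rfl | hε'
  · convert mk_sum_pow_mem_A3_three (a := s) (b := s) (c := t) ⟨hs.le, by linarith⟩
      ⟨hs.le, by linarith⟩ ⟨by linarith, ht⟩ using 3 <;> ring
  have hδ_mid : δ ^ 3 ≤ (t - s) ^ 3 := by gcongr
  have hδ_L : δ ^ 2 * δ ≤ (s - -1) ^ 2 * (t - -1) := by gcongr; linarith
  obtain ⟨x, y, z, hx₀, hxs, hsy, hyz, hzt, hx, hy, hz⟩ :=
    exists_three_roots_sq_mul_add (d := ε' / 3) hs hst (by positivity)
      (by nlinarith) (by nlinarith)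
  obtain ⟨h₁, h₂, h₃⟩ := power_sums_of_roots_add_const (a := s) (b := s) (c := t) (d := ε' / 3)
    (hxs.trans hsy).ne (hxs.trans (hsy.trans hyz)).ne hyz.ne
    (by linear_combination hx) (by linear_combination hy) (by linear_combination hz)
  convert mk_sum_pow_mem_A3_three (a := x) (b := y) (c := z) ⟨hx₀.le, by linarith⟩
    ⟨by linarith, by linarith⟩ ⟨by linarith, by linarith⟩ using 2
  · linear_combination -h₁
  · congr 1
    · linear_combination -h₂
    · linear_combination -h₃
end
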